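/- arXiv:2604.01488 — 4 statements merged into one kernel-verified Lean document; each statement's English description precedes it below -/
import Mathlib

section
/- For every integer k ≥ 2 and every n ≥ 1, the word W_n^{(k)} admits the block decomposition: if n < k then W_n^{(k)} = W_{n−1}^{(k)} W_{n−2}^{(k)} ⋯ W_0^{(k)} n (the concatenation of all previous iterates in decreasing order followed by the single letter n), while if n ≥ k then W_n^{(k)} = W_{n−1}^{(k)} W_{n−2}^{(k)} ⋯ W_{n−k+1}^{(k)} (k ⊕ W_{n−k}^{(k)}). -/
/-- Image of a single letter `m = k*i + j` under the k-Bonacci morphism `φ_k` over ℕ: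
`φ_k(ki+j) = (ki)(ki+j+1)` for `0 ≤ j ≤ k-2`, and `φ_k(ki+(k-1)) = ki+k`. -/
def phiLetter (k m : ℕ) : List ℕ :=
  if m % k = k - 1 then [m + 1] else [k * (m / k), m + 1]

/-- The morphism `φ_k`, extended to words by concatenation. -/
def phi (k : ℕ) (w : List ℕ) : List ℕ := (w.map (phiLetter k)).flatten

/-- `W k n = φ_k^n(0)`, the n-th iterate of `φ_k` applied to the one-letter word `0`. -/
def W (k n : ℕ) : List ℕ := (phi k)^[n] [0]

/-- `shift n w = n ⊕ w`, adding `n` to every letter. -/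
def shift (n : ℕ) (w : List ℕ) : List ℕ := w.map (· + n)

/-- `occ B w = |w|_B`, the number of (possibly overlapping) occurrences of `B`
as a factor of `w`, i.e. the number of positions `i` at which `B` is a prefix
of the suffix of `w` starting at `i`. -/
def occ (B w : List ℕ) : ℕ :=
  ((List.range (w.length + 1)).filter (fun i => decide (B <+: w.drop i))).length

/-- `C k B = C_B^{(k)}(y) = Σ_{n≥0} |W_n^{(k)}|_B yⁿ` as a formal power series over ℚ. -/
noncomputable def C (k : ℕ) (B : List ℕ) : PowerSeries ℚ :=
  PowerSeries.mk (fun n => (occ B (W k n) : ℚ))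

/-- `Hgf r = H_r(y)`, the multiplicative inverse of `1 - y - y² - ⋯ - y^r`. -/
noncomputable def Hgf (r : ℕ) : PowerSeries ℚ :=
  (1 - ∑ j ∈ Finset.Icc 1 r, (PowerSeries.X : PowerSeries ℚ) ^ j)⁻¹

/-- `Ggf r = G_r(y) = (1 - y^r)·H_r(y) - 1`. -/
noncomputable def Ggf (r : ℕ) : PowerSeries ℚ :=
  (1 - (PowerSeries.X : PowerSeries ℚ) ^ r) * Hgf r - 1

/-- The set `B^{(k)} = B_1^{(k)} ∪ B_2^{(k)} ∪ B_3^{(k)}` of length-2 words. -/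
def Bset (k : ℕ) : Set (List ℕ) :=
  {U | (∃ i a : ℕ, 1 ≤ a ∧ U = [a + k * i, k + k * i]) ∨
       (∃ i b : ℕ, 1 ≤ b ∧ b ≤ k - 1 ∧ U = [k * i, b + k * i]) ∨
       (∃ a : ℕ, 1 ≤ a ∧ U = [a, 0])}

/-- The list of blocks in the decomposition of `W_n^{(k)}` for `n ≥ k`:
`W_{n-1}, …, W_{n-k+1}, k ⊕ W_{n-k}`. -/
def blocks (k n : ℕ) : List (List ℕ) :=
  (List.range (k - 1)).map (fun j => W k (n - 1 - j)) ++ [shift k (W k (n - k))]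

lemma phi_append (k : ℕ) (a b : List ℕ) : phi k (a ++ b) = phi k a ++ phi k b := by
  simp [phi]

lemma W_succ (k n : ℕ) : W k (n + 1) = phi k (W k n) := by
  simp [W, Function.iterate_succ_apply']

lemma phi_shift (k : ℕ) (hk : 1 ≤ k) (w : List ℕ) :
    phi k (shift k w) = shift k (phi k w) := by
  induction w with
  | nil => simp [phi, shift]
  | cons m t ih =>
    have h1 : (m + k) % k = m % k := Nat.add_mod_right m k
    have h2 : (m + k) / k = m / k + 1 := Nat.add_div_right m hk
    show phi k (shift k (m :: t)) = shift k (phi k (m :: t))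
    have : shift k (m :: t) = (m + k) :: shift k t := by simp [shift]
    rw [this]
    have hc : ∀ a l, phi k (a :: l) = phiLetter k a ++ phi k l := by intro a l; simp [phi]
    rw [hc, hc, ih]
    have : phiLetter k (m + k) = shift k (phiLetter k m) := by
      by_cases h : m % k = k - 1 <;>
        simp [phiLetter, h1, h2, h, shift, Nat.mul_add, Nat.mul_one] <;> omega
    rw [this]
    simp [shift]

lemma rev_map (m : ℕ) (f : ℕ → List ℕ) :
    (List.range m).reverse.map f = (List.range m).map (fun j => f (m - 1 - j)) := by
  apply List.ext_getElem <;> simp [List.getElem_reverse]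

lemma phi_cons (k a : ℕ) (l : List ℕ) : phi k (a :: l) = phiLetter k a ++ phi k l := by
  simp [phi]

lemma phi_flatten (k : ℕ) (L : List (List ℕ)) :
    phi k L.flatten = (L.map (phi k)).flatten := by
  induction L with
  | nil => simp [phi]
  | cons a t ih => simp [phi_append, ih]

lemma phiF (k n : ℕ) :
    phi k (((List.range n).reverse.map (W k)).flatten)
      = ((List.range n).reverse.map (fun j => W k (j + 1))).flatten := by
  rw [phi_flatten, List.map_map]
  congr 1
  apply List.map_congr_left
  intro j _
  simp [W_succ]

lemma FF (k n : ℕ) :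
    ((List.range n).reverse.map (fun j => W k (j + 1))).flatten ++ [0]
      = ((List.range (n + 1)).reverse.map (W k)).flatten := by
  induction n with
  | zero => simp [List.range_succ, W]
  | succ n ih =>
    simp only [List.range_succ, List.reverse_append, List.reverse_singleton,
      List.singleton_append, List.map_cons, List.flatten_cons,
      List.append_assoc] at ih ⊢
    rw [ih]
    simp

lemma part1 (k : ℕ) (hk : 2 ≤ k) :
    ∀ n, n < k → W k n = ((List.range n).reverse.map (W k)).flatten ++ [n] := by
  intro n
  induction n with
  | zero => intro _; simp [W]
  | succ n ih =>
    intro h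
    have hn : n < k := Nat.lt_of_succ_lt h
    have hmod : n % k ≠ k - 1 := by rw [Nat.mod_eq_of_lt hn]; omega
    have h2 : n / k = 0 := Nat.div_eq_of_lt hn
    have hL : phiLetter k n = [0, n + 1] := by
      rw [phiLetter, if_neg hmod, h2, Nat.mul_zero]
    rw [W_succ, ih hn, phi_append, phi_cons, hL, phiF]
    rw [show phi k ([] : List ℕ) = [] from rfl, List.append_nil]
    rw [show ([0, n + 1] : List ℕ) = [0] ++ [n + 1] from rfl,
      ← List.append_assoc, FF]

lemma part2base (k : ℕ) (hk : 2 ≤ k) :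
    W k k = ((List.range (k - 1)).map (fun j => W k (k - 1 - j))).flatten
      ++ shift k (W k (k - k)) := by
  obtain ⟨m, rfl⟩ : ∃ m, k = m + 1 := ⟨k - 1, by omega⟩
  simp only [Nat.add_sub_cancel, Nat.sub_self]
  have hmod : m % (m + 1) = (m + 1) - 1 := by
    rw [Nat.mod_eq_of_lt (by omega)]; omega
  have hL : phiLetter (m + 1) m = [m + 1] := by
    rw [phiLetter, if_pos hmod]
  rw [W_succ, part1 _ hk m (by omega), phi_append, phi_cons, hL, phiF]
  rw [show phi (m + 1) ([] : List ℕ) = [] from rfl, List.append_nil]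
  rw [rev_map]
  have hsh : shift (m + 1) (W (m + 1) 0) = [m + 1] := by simp [W, shift]
  rw [hsh]
  have hmc : (List.range m).map (fun j => W (m + 1) (m - 1 - j + 1))
      = (List.range m).map (fun j => W (m + 1) (m - j)) := by
    apply List.map_congr_left
    intro j hj
    simp only [List.mem_range] at hj
    congr 1
    omega
  rw [hmc]

lemma part2 (k : ℕ) (hk : 2 ≤ k) :
    ∀ n, k ≤ n → W k n = ((List.range (k - 1)).map (fun j => W k (n - 1 - j))).flatten
      ++ shift k (W k (n - k)) := by
  intro n hn
  induction n, hn using Nat.le_induction with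
  | base => exact part2base k hk
  | succ n hn ih =>
    rw [W_succ, ih, phi_append, phi_flatten, List.map_map, phi_shift k (by omega)]
    have h1 : (List.range (k - 1)).map (phi k ∘ fun j => W k (n - 1 - j))
        = (List.range (k - 1)).map (fun j => W k (n + 1 - 1 - j)) := by
      apply List.map_congr_left
      intro j hj
      simp only [List.mem_range] at hj
      simp only [Function.comp_apply, ← W_succ]
      congr 1
      omega
    have h2 : W k (n - k + 1) = W k (n + 1 - k) := by congr 1; omega
    rw [h1, ← W_succ, h2]

theorem stmt0 (k n : ℕ) (hk : 2 ≤ k) (hn : 1 ≤ n) :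
    (n < k → W k n = ((List.range n).reverse.map (W k)).flatten ++ [n]) ∧
    (k ≤ n → W k n =
        ((List.range (k - 1)).map (fun j => W k (n - 1 - j))).flatten
          ++ shift k (W k (n - k))) :=
  ⟨part1 k hk n, part2 k hk n⟩
end

section
/- Let k ≥ 3 and d ∈ ℕ. Then C_d^{(k)}(y) = y^d · (H_{k−1}(y))^{⌊d/k⌋+1} as formal power series over ℚ, where d is regarded as a one-letter word and ⌊d/k⌋ is the integer quotient of d by k. -/
lemma occ_cons (B : List ℕ) (a : ℕ) (w : List ℕ) :
    occ B (a :: w) = (if B <+: (a :: w) then 1 else 0) + occ B w := by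
  unfold occ
  rw [show (a::w).length + 1 = (w.length + 1) + 1 from rfl, List.range_succ_eq_map]
  rw [List.filter_cons, List.filter_map]
  have he : ((fun i => decide (B <+: List.drop i (a :: w))) ∘ Nat.succ)
      = fun i => decide (B <+: List.drop i w) := by
    funext i; simp [Nat.succ_eq_add_one, List.drop_succ_cons]
  rw [he]
  by_cases h : B <+: (a :: w) <;> simp [h] <;> omega

lemma occ_single (d : ℕ) (w : List ℕ) : occ [d] w = w.count d := by
  induction w with
  | nil => rfl
  | cons a w ih =>
    rw [occ_cons, ih, List.count_cons]
    have : ([d] <+: a :: w) ↔ a = d := by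
      rw [List.cons_prefix_cons]; simp [eq_comm]
    by_cases h : a = d <;> simp [this, h] <;> omega

lemma modk (k a c j : ℕ) (hk : 0 < k) (hj : j < k) (ha : a = k*c + j) :
    a / k = c ∧ a % k = j := by
  subst ha
  constructor
  · rw [Nat.mul_add_div hk, Nat.div_eq_of_lt hj]; omega
  · rw [Nat.mul_add_mod, Nat.mod_eq_of_lt hj]

lemma count_phiLetter (k d a : ℕ) (hk : 3 ≤ k) :
    (phiLetter k a).count d =
      (if 1 ≤ d then ([a].count (d-1)) else 0)
      + (if k ∣ d then ∑ j ∈ Finset.range (k-1), [a].count (d+j) else 0) := by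
  have hk0 : 0 < k := by omega
  have hcnt : ∀ x y : ℕ, [x].count y = if x = y then 1 else 0 := by
    intro x y; simp [List.count_singleton']
  have h1 : (if 1 ≤ d then ([a].count (d-1)) else 0) = if a + 1 = d then 1 else 0 := by
    by_cases h : 1 ≤ d
    · rw [if_pos h, hcnt]
      by_cases h2 : a + 1 = d
      · rw [if_pos (by omega), if_pos h2]
      · rw [if_neg (by omega), if_neg h2]
    · rw [if_neg h, if_neg (by omega)]
  have hsum : (if k ∣ d then ∑ j ∈ Finset.range (k-1), [a].count (d+j) else 0)
      = if a % k ≠ k - 1 ∧ k * (a / k) = d then 1 else 0 := by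
    by_cases hcase : a % k ≠ k - 1 ∧ k * (a / k) = d
    · rw [if_pos hcase]
      obtain ⟨hmod, hdiv⟩ := hcase
      have hdvd : k ∣ d := ⟨a / k, hdiv.symm⟩
      rw [if_pos hdvd]
      have hdm : a = d + a % k := by
        conv_lhs => rw [← Nat.div_add_mod a k]
        omega
      have heq : ∀ j, [a].count (d+j) = if j = a % k then 1 else 0 := by
        intro j; rw [hcnt]
        apply if_congr _ rfl rfl
        omega
      simp only [heq]
      rw [Finset.sum_ite_eq' (Finset.range (k-1)) (a % k) (fun _ => 1)]
      rw [if_pos]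
      simp only [Finset.mem_range]
      have := Nat.mod_lt a hk0
      omega
    · rw [if_neg hcase]
      by_cases hdvd : k ∣ d
      · rw [if_pos hdvd]
        apply Finset.sum_eq_zero
        intro j hj
        simp only [Finset.mem_range] at hj
        rw [hcnt, if_neg]
        intro he
        obtain ⟨c, rfl⟩ := hdvd
        obtain ⟨hd, hm⟩ := modk k a c j hk0 (by omega) (by omega)
        exact hcase ⟨by omega, by rw [hd]⟩
      · rw [if_neg hdvd]
  rw [h1, hsum]
  unfold phiLetter
  by_cases hm : a % k = k - 1
  · rw [if_pos hm, hcnt,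
      if_neg (show ¬(a % k ≠ k - 1 ∧ k * (a / k) = d) from fun hc => hc.1 hm)]
    simp
  · rw [if_neg hm]
    have h2 : List.count d [k*(a/k), a+1]
        = (if k*(a/k) = d then 1 else 0) + (if a + 1 = d then 1 else 0) := by
      simp only [List.count_cons, List.count_nil, beq_iff_eq]
      split_ifs <;> omega
    have hiff : (a % k ≠ k-1 ∧ k*(a/k) = d) ↔ (k*(a/k) = d) :=
      ⟨fun h => h.2, fun h => ⟨hm, h⟩⟩
    rw [h2, if_congr hiff rfl rfl, Nat.add_comm]

lemma count_phi (k d : ℕ) (hk : 3 ≤ k) (w : List ℕ) :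
    (phi k w).count d =
      (if 1 ≤ d then (w.count (d-1)) else 0)
      + (if k ∣ d then ∑ j ∈ Finset.range (k-1), w.count (d+j) else 0) := by
  induction w with
  | nil => simp [phi]
  | cons a w ih =>
    have h : phi k (a :: w) = phiLetter k a ++ phi k w := by simp [phi]
    rw [h, List.count_append, ih, count_phiLetter k d a hk]
    have hc : ∀ y, (a :: w).count y = [a].count y + w.count y := by
      intro y; simp [List.count_cons, List.count_singleton']; omega
    by_cases h1 : 1 ≤ d <;> by_cases h2 : k ∣ d <;>
      simp [h1, h2, hc, Finset.sum_add_distrib] <;> omega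

lemma C_rec (k d : ℕ) (hk : 3 ≤ k) :
    C k [d] = (if d = 0 then 1 else 0)
      + PowerSeries.X * ((if 1 ≤ d then C k [d-1] else 0)
          + (if k ∣ d then ∑ j ∈ Finset.range (k-1), C k [d+j] else 0)) := by
  ext n
  rw [map_add]
  cases n with
  | zero =>
    rw [C, PowerSeries.coeff_mk]
    have h1 : (PowerSeries.coeff (R := ℚ) 0) (PowerSeries.X * ((if 1 ≤ d then C k [d-1] else 0)
          + (if k ∣ d then ∑ j ∈ Finset.range (k-1), C k [d+j] else 0))) = 0 := by
      rw [PowerSeries.coeff_zero_eq_constantCoeff, map_mul]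
      simp
    rw [h1]
    have h2 : W k 0 = [0] := rfl
    rw [h2, occ_single]
    by_cases hd : d = 0 <;> simp [hd, List.count_singleton', eq_comm]
  | succ n =>
    rw [C, PowerSeries.coeff_mk, PowerSeries.coeff_succ_X_mul]
    have h2 : W k (n+1) = phi k (W k n) := Function.iterate_succ_apply' _ _ _
    rw [h2, occ_single, count_phi k d hk, map_add]
    have e1 : (PowerSeries.coeff (R := ℚ) n) (if 1 ≤ d then C k [d-1] else 0)
        = ((if 1 ≤ d then (W k n).count (d-1) else 0 : ℕ) : ℚ) := by
      by_cases h : 1 ≤ d <;> simp [h, C, occ_single]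
    have e2 : (PowerSeries.coeff (R := ℚ) n) (if k ∣ d then ∑ j ∈ Finset.range (k-1), C k [d+j] else 0)
        = ((if k ∣ d then ∑ j ∈ Finset.range (k-1), (W k n).count (d+j) else 0 : ℕ) : ℚ) := by
      by_cases h : k ∣ d <;> simp [h, C, occ_single]
    have e0 : (PowerSeries.coeff (R := ℚ) (n+1)) (if d = 0 then (1 : PowerSeries ℚ) else 0) = 0 := by
      by_cases hd : d = 0 <;> simp [hd]
    rw [e1, e2, e0]
    push_cast
    ring

lemma SH_one (k : ℕ) (hk : 3 ≤ k) :
    (1 - ∑ j ∈ Finset.Icc 1 (k-1), (PowerSeries.X : PowerSeries ℚ)^j) * Hgf (k-1) = 1 := by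
  apply PowerSeries.mul_inv_cancel
  rw [map_sub, map_one, map_sum]
  have h : ∀ j ∈ Finset.Icc 1 (k-1), PowerSeries.constantCoeff (R := ℚ) (PowerSeries.X^j) = 0 := by
    intro j hj
    simp only [Finset.mem_Icc] at hj
    rw [map_pow, PowerSeries.constantCoeff_X, zero_pow (by omega)]
  rw [Finset.sum_eq_zero h]
  norm_num

lemma shiftC (k d : ℕ) (hk : 3 ≤ k) (hd : d % k ≠ 0) :
    C k [d] = PowerSeries.X * C k [d-1] := by
  have hd0 : d ≠ 0 := by intro h; subst h; simp at hd
  have hdvd : ¬ k ∣ d := by rwa [Nat.dvd_iff_mod_eq_zero]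
  rw [C_rec k d hk, if_neg hd0, if_pos (by omega), if_neg hdvd]
  ring

lemma upC (k : ℕ) (hk : 3 ≤ k) (i : ℕ) : ∀ j, j ≤ k - 1 →
    C k [k*i + j] = PowerSeries.X^j * C k [k*i] := by
  intro j
  induction j with
  | zero => intro _; simp
  | succ j ih =>
    intro hj
    have hmod : (k*i + (j+1)) % k = j + 1 := by
      rw [Nat.mul_add_mod, Nat.mod_eq_of_lt (by omega)]
    rw [shiftC k _ hk (by omega), show k*i + (j+1) - 1 = k*i + j from by omega,
      ih (by omega)]
    ring

lemma sum_Icc_shift (r : ℕ) (f : ℕ → PowerSeries ℚ) :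
    ∑ j ∈ Finset.Icc 1 r, f j = ∑ j ∈ Finset.range r, f (j+1) := by
  rw [← Finset.Ico_add_one_right_eq_Icc, Finset.sum_Ico_eq_sum_range]
  simp [Nat.add_comm]

lemma divC (k i : ℕ) (hk : 3 ≤ k) :
    C k [k*i] * (1 - ∑ j ∈ Finset.Icc 1 (k-1), (PowerSeries.X : PowerSeries ℚ)^j)
      = (if i = 0 then 1 else PowerSeries.X * C k [k*i - 1]) := by
  have h := C_rec k (k*i) hk
  rw [if_pos (dvd_mul_right k i)] at h
  have hsum : ∑ j ∈ Finset.range (k-1), C k [k*i + j]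
      = (∑ j ∈ Finset.range (k-1), (PowerSeries.X : PowerSeries ℚ)^j) * C k [k*i] := by
    rw [Finset.sum_mul]
    apply Finset.sum_congr rfl
    intro j hj
    simp only [Finset.mem_range] at hj
    exact upC k hk i j (by omega)
  rw [hsum] at h
  have hre : ∑ j ∈ Finset.Icc 1 (k-1), (PowerSeries.X : PowerSeries ℚ)^j
      = PowerSeries.X * ∑ j ∈ Finset.range (k-1), (PowerSeries.X : PowerSeries ℚ)^j := by
    rw [sum_Icc_shift, Finset.mul_sum]
    apply Finset.sum_congr rfl
    intro j hj
    rw [← pow_succ']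
  rcases Nat.eq_zero_or_pos i with hi | hi
  · subst hi
    rw [if_pos rfl]
    rw [if_pos (by simp), if_neg (by simp)] at h
    rw [hre]
    linear_combination h
  · rw [if_neg (by omega)]
    rw [if_neg (Nat.mul_ne_zero (by omega) (by omega)), if_pos (Nat.one_le_iff_ne_zero.mpr (Nat.mul_ne_zero (by omega) (by omega)))] at h
    rw [hre]
    linear_combination h

theorem stmt6 (k d : ℕ) (hk : 3 ≤ k) :
    C k [d] = PowerSeries.X ^ d * Hgf (k - 1) ^ (d / k + 1) := by
  induction d using Nat.strong_induction_on with
  | _ d ih =>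
    by_cases hmod : d % k = 0
    · obtain ⟨i, rfl⟩ : ∃ i, d = k * i := ⟨d / k, by have := Nat.div_add_mod d k; omega⟩
      have hdiv := divC k i hk
      have hSH := SH_one k hk
      rcases Nat.eq_zero_or_pos i with h0 | h0
      · subst h0
        rw [if_pos rfl] at hdiv
        simp only [Nat.mul_zero] at hdiv
        simp only [Nat.mul_zero, pow_zero, one_mul, Nat.zero_div, zero_add, pow_one]
        calc C k [0] = C k [0] * ((1 - ∑ j ∈ Finset.Icc 1 (k-1),
                (PowerSeries.X : PowerSeries ℚ)^j) * Hgf (k-1)) := by rw [hSH, mul_one]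
          _ = (C k [(0:ℕ)] * (1 - ∑ j ∈ Finset.Icc 1 (k-1),
                (PowerSeries.X : PowerSeries ℚ)^j)) * Hgf (k-1) := by ring
          _ = Hgf (k-1) := by rw [hdiv, one_mul]
      · obtain ⟨i', rfl⟩ : ∃ i', i = i' + 1 := ⟨i - 1, by omega⟩
        rw [if_neg (by omega)] at hdiv
        have hmul : k * i' + k = k * (i'+1) := by rw [Nat.mul_succ]
        have hpos : 1 ≤ k * (i'+1) := by omega
        have ihm := ih (k*(i'+1) - 1) (by omega)
        have hdm : (k*(i'+1) - 1) / k = i' :=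
          (modk k (k*(i'+1)-1) i' (k-1) (by omega) (by omega) (by omega)).1
        have hstep : C k [k*(i'+1)]
            = PowerSeries.X ^ (k*(i'+1) - 1 + 1) * Hgf (k-1) ^ ((k*(i'+1)-1)/k + 1 + 1) := by
          calc C k [k*(i'+1)] = C k [k*(i'+1)] * ((1 - ∑ j ∈ Finset.Icc 1 (k-1),
                (PowerSeries.X : PowerSeries ℚ)^j) * Hgf (k-1)) := by rw [hSH, mul_one]
            _ = (C k [k*(i'+1)] * (1 - ∑ j ∈ Finset.Icc 1 (k-1),
                (PowerSeries.X : PowerSeries ℚ)^j)) * Hgf (k-1) := by ring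
            _ = (PowerSeries.X * C k [k*(i'+1) - 1]) * Hgf (k-1) := by rw [hdiv]
            _ = (PowerSeries.X * (PowerSeries.X ^ (k*(i'+1) - 1)
                  * Hgf (k-1) ^ ((k*(i'+1)-1)/k + 1))) * Hgf (k-1) := by rw [ihm]
            _ = _ := by ring
        rw [hstep, hdm, show k*(i'+1) - 1 + 1 = k*(i'+1) from by omega,
          Nat.mul_div_cancel_left _ (show 0 < k by omega)]
    · have h1 := shiftC k d hk hmod
      have hd1 : 1 ≤ d := by
        rcases Nat.eq_zero_or_pos d with h | h
        · exfalso; apply hmod; simp [h]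
        · exact h
      have ihm := ih (d-1) (by omega)
      have hda := Nat.div_add_mod d k
      have hmlt := Nat.mod_lt d (show 0 < k by omega)
      have hq : (d-1)/k = d/k :=
        (modk k (d-1) (d/k) (d % k - 1) (by omega) (by omega) (by omega)).1
      rw [h1, ihm, hq]
      have : PowerSeries.X * (PowerSeries.X ^ (d-1) * Hgf (k-1) ^ (d/k + 1))
          = PowerSeries.X ^ (d-1+1) * Hgf (k-1) ^ (d/k + 1) := by ring
      rw [this, show d - 1 + 1 = d from by omega]
end

section
/- Let k ≥ 2. For every n ∈ ℕ, every length-2 factor of W_n^{(k)} belongs to the set B^{(k)}. -/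
def Good (k : ℕ) (w : List ℕ) : Prop := ∀ x y : ℕ, [x, y] <:+: w → [x, y] ∈ Bset k

lemma pair_infix_cons {x y c : ℕ} {L : List ℕ} (h : [x, y] <:+: (c :: L)) :
    (x = c ∧ ∃ L', L = y :: L') ∨ [x, y] <:+: L := by
  obtain ⟨s, t, hst⟩ := h
  cases s with
  | nil =>
    simp only [List.nil_append, List.cons_append] at hst
    obtain ⟨h1, h2⟩ := List.cons.inj hst
    exact Or.inl ⟨h1, t, h2.symm⟩
  | cons a s' =>
    simp only [List.cons_append] at hst
    exact Or.inr ⟨s', t, (List.cons.inj hst).2⟩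

lemma good_tail {k a : ℕ} {t : List ℕ} (h : Good k (a :: t)) : Good k t :=
  fun x y hxy => h x y (hxy.trans (List.suffix_cons a t).isInfix)

lemma intra {k : ℕ} (hk : 2 ≤ k) (a : ℕ) (h : a % k ≠ k - 1) :
    [k * (a / k), a + 1] ∈ Bset k := by
  have hd := Nat.div_add_mod a k
  have hm : a % k < k := Nat.mod_lt _ (by omega)
  have hle : a % k + 1 ≤ k - 1 := by omega
  refine Or.inr (Or.inl ⟨a / k, a % k + 1, by omega, hle, ?_⟩)
  simp only [List.cons.injEq, and_true, true_and]
  omega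

lemma phiLetter_head {k b y : ℕ} {M : List ℕ} (hy : phiLetter k b = y :: M) :
    (b % k = k - 1 ∧ y = b + 1) ∨ (b % k ≠ k - 1 ∧ y = k * (b / k)) := by
  unfold phiLetter at hy
  split at hy
  · exact Or.inl ⟨by assumption, ((List.cons.inj hy).1).symm⟩
  · exact Or.inr ⟨by assumption, ((List.cons.inj hy).1).symm⟩

lemma boundary {k : ℕ} (hk : 2 ≤ k) {a b y : ℕ} {M : List ℕ}
    (hab : [a, b] ∈ Bset k) (hy : phiLetter k b = y :: M) : [a + 1, y] ∈ Bset k := by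
  have hk0 : 0 < k := by omega
  rcases hab with ⟨i, a', ha', heq⟩ | ⟨i, b', hb1, hb2, heq⟩ | ⟨a', ha', heq⟩
  · obtain ⟨ha, hb⟩ : a = a' + k * i ∧ b = k + k * i := by simpa using heq
    have hbk : b % k = 0 := by
      rw [hb, Nat.add_mul_mod_self_left, Nat.mod_self]
    have hbd : b / k = 1 + i := by
      rw [hb, Nat.add_mul_div_left _ _ hk0, Nat.div_self hk0]
    rcases phiLetter_head hy with ⟨h1, _⟩ | ⟨_, h2⟩
    · omega
    · refine Or.inl ⟨i, a' + 1, by omega, ?_⟩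
      rw [h2, hbd]
      simp only [List.cons.injEq, and_true, true_and]
      constructor
      · omega
      · ring
  · obtain ⟨ha, hb⟩ : a = k * i ∧ b = b' + k * i := by simpa using heq
    have hbk : b % k = b' := by
      rw [hb, Nat.add_mul_mod_self_left, Nat.mod_eq_of_lt (by omega)]
    have hbd : b / k = i := by
      rw [hb, Nat.add_mul_div_left _ _ hk0, Nat.div_eq_of_lt (by omega), Nat.zero_add]
    rcases phiLetter_head hy with ⟨h1, h2⟩ | ⟨h1, h2⟩
    · -- b' = k - 1, y = b + 1 = k + k*i
      refine Or.inl ⟨i, 1, le_refl 1, ?_⟩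
      rw [h2, hb]
      simp only [List.cons.injEq, and_true, true_and]
      omega
    · -- y = k * i
      rw [h2, hbd]
      rcases Nat.eq_zero_or_pos i with hi | hi
      · subst hi
        exact Or.inr (Or.inr ⟨a + 1, by omega, by simp [ha]⟩)
      · obtain ⟨i', rfl⟩ : ∃ i', i = i' + 1 := ⟨i - 1, by omega⟩
        refine Or.inl ⟨i', k + 1, by omega, ?_⟩
        simp only [List.cons.injEq, and_true, true_and]
        constructor
        · rw [ha]; ring
        · ring
  · obtain ⟨ha, hb⟩ : a = a' ∧ b = 0 := by simpa using heq
    rcases phiLetter_head hy with ⟨h1, _⟩ | ⟨_, h2⟩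
    · rw [hb] at h1; simp at h1; omega
    · refine Or.inr (Or.inr ⟨a + 1, by omega, ?_⟩)
      rw [h2, hb]
      simp

lemma phiLetter_ne_nil (k b : ℕ) : phiLetter k b ≠ [] := by
  unfold phiLetter; split <;> simp

lemma goodStep {k : ℕ} (hk : 2 ≤ k) : ∀ w : List ℕ, Good k w → Good k (phi k w) := by
  intro w
  induction w with
  | nil =>
    intro _ x y h
    have := h.length_le
    simp [phi] at this
  | cons a t ih =>
    intro hw x y hxy
    have hphi : phi k (a :: t) = phiLetter k a ++ phi k t := by simp [phi]
    rw [hphi] at hxy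
    have hbdry : ∀ L' : List ℕ, phi k t = y :: L' → x = a + 1 → [x, y] ∈ Bset k := by
      intro L' hL hx
      obtain ⟨b, t', rfl⟩ : ∃ b t', t = b :: t' := by
        cases t with
        | nil => simp [phi] at hL
        | cons b t' => exact ⟨b, t', rfl⟩
      have hphi2 : phi k (b :: t') = phiLetter k b ++ phi k t' := by simp [phi]
      rw [hphi2] at hL
      have hab : [a, b] ∈ Bset k := hw a b ⟨[], t', rfl⟩
      cases h3 : phiLetter k b with
      | nil => exact absurd h3 (phiLetter_ne_nil k b)
      | cons y0 M =>
        rw [h3] at hL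
        have hy0 : y0 = y := (List.cons.inj hL).1
        subst hy0; subst hx
        exact boundary hk hab h3
    by_cases hmod : a % k = k - 1
    · rw [phiLetter, if_pos hmod, List.singleton_append] at hxy
      rcases pair_infix_cons hxy with ⟨hx, L', hL⟩ | h2
      · exact hbdry L' hL hx
      · exact ih (good_tail hw) x y h2
    · rw [phiLetter, if_neg hmod, List.cons_append, List.cons_append,
        List.nil_append] at hxy
      rcases pair_infix_cons hxy with ⟨hx, L', hL⟩ | h2
      · have hy : y = a + 1 := ((List.cons.inj hL).1).symm
        rw [hx, hy]
        exact intra hk a hmod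
      · rcases pair_infix_cons h2 with ⟨hx, L', hL⟩ | h3
        · exact hbdry L' hL hx
        · exact ih (good_tail hw) x y h3

theorem stmt9 (k : ℕ) (hk : 2 ≤ k) (n : ℕ) (U : List ℕ) (hlen : U.length = 2)
    (hfac : U <:+: W k n) : U ∈ Bset k := by
  have hgood : ∀ m : ℕ, Good k (W k m) := by
    intro m
    induction m with
    | zero =>
      intro x y h
      have := h.length_le
      simp [W] at this
    | succ m ih =>
      have : W k (m + 1) = phi k (W k m) := by
        simp only [W, Function.iterate_succ_apply']
      rw [this]
      exact goodStep hk (W k m) ih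
  obtain ⟨x, y, rfl⟩ : ∃ x y, U = [x, y] := by
    match U, hlen with
    | [x, y], _ => exact ⟨x, y, rfl⟩
  exact hgood n x y hfac
end

section
/- Let k ≥ 3 and a ≥ 1, and set B = (a.0). Then C_B^{(k)}(y) = y^a · G_{k−1}(y) as formal power series over ℚ. -/
namespace Stmt15

lemma phi_append (k : ℕ) (u v : List ℕ) : phi k (u ++ v) = phi k u ++ phi k v := by
  simp [phi]

lemma phi_cons (k x : ℕ) (w : List ℕ) : phi k (x :: w) = phiLetter k x ++ phi k w := by
  simp [phi]

lemma phiLetter_add (k m : ℕ) (hk : 1 ≤ k) :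
    phiLetter k (m + k) = shift k (phiLetter k m) := by
  unfold phiLetter
  rw [Nat.add_mod_right, Nat.add_div_right _ hk]
  split <;> simp [shift, Nat.mul_add] <;> omega

lemma phi_shift (k : ℕ) (hk : 1 ≤ k) (w : List ℕ) :
    phi k (shift k w) = shift k (phi k w) := by
  induction w with
  | nil => simp [phi, shift]
  | cons x t ih =>
      have h1 : shift k (x :: t) = (x + k) :: shift k t := rfl
      rw [h1, phi_cons, phi_cons, phiLetter_add k x hk, ih]
      simp [shift]

lemma W_zero (k : ℕ) : W k 0 = [0] := rfl

lemma W_succ (k n : ℕ) : W k (n + 1) = phi k (W k n) :=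
  Function.iterate_succ_apply' _ _ _

lemma W_cons (k : ℕ) (hk : 2 ≤ k) (n : ℕ) : ∃ t, W k n = 0 :: t := by
  induction n with
  | zero => exact ⟨[], rfl⟩
  | succ n ih =>
      obtain ⟨t, ht⟩ := ih
      have h0 : phiLetter k 0 = [0, 1] := by
        unfold phiLetter
        have h2 : 0 % k = 0 := Nat.zero_mod k
        rw [if_neg (by omega)]
        simp
      exact ⟨1 :: phi k t, by rw [W_succ, ht, phi_cons, h0]; rfl⟩

lemma W_ne_nil (k n : ℕ) (hk : 2 ≤ k) : W k n ≠ [] := by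
  obtain ⟨t, ht⟩ := W_cons k hk n
  simp [ht]

lemma W_head? (k n : ℕ) (hk : 2 ≤ k) : (W k n).head? = some 0 := by
  obtain ⟨t, ht⟩ := W_cons k hk n
  simp [ht]

lemma phi_ne_nil (k : ℕ) (w : List ℕ) (hw : w ≠ []) : phi k w ≠ [] := by
  cases w with
  | nil => exact absurd rfl hw
  | cons x t =>
      rw [phi_cons]
      unfold phiLetter
      split <;> simp

lemma getLast?_phi (k : ℕ) (w : List ℕ) :
    (phi k w).getLast? = w.getLast?.map (· + 1) := by
  induction w with
  | nil => simp [phi]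
  | cons x t ih =>
      rw [phi_cons]
      cases t with
      | nil =>
          unfold phiLetter
          split <;> simp [phi]
      | cons y s =>
          rw [List.getLast?_append, ih]
          cases h : (y :: s).getLast? with
          | none => simp at h
          | some v => simp [h]

lemma W_getLast? (k n : ℕ) : (W k n).getLast? = some n := by
  induction n with
  | zero => rfl
  | succ n ih => rw [W_succ, getLast?_phi, ih]; rfl


/-- Tail of the decomposition of `W k n`. -/
def tailW (k n : ℕ) : List ℕ := if n < k then [n] else shift k (W k (n - k))

/-- Concatenation of the first `M` blocks `W (n-1), …, W (n-M)`. -/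
def blk (k n M : ℕ) : List ℕ := ((List.range M).map (fun j => W k (n - 1 - j))).flatten

lemma blk_zero (k n : ℕ) : blk k n 0 = [] := rfl

lemma blk_succ (k n M : ℕ) : blk k n (M + 1) = blk k n M ++ W k (n - 1 - M) := by
  unfold blk
  rw [List.range_succ, List.map_append, List.flatten_append]
  simp

lemma phi_blk (k n M : ℕ) (h : M ≤ n) : phi k (blk k n M) = blk k (n + 1) M := by
  induction M with
  | zero => simp [blk_zero, phi]
  | succ M ih =>
      rw [blk_succ, blk_succ, phi_append, ih (by omega), ← W_succ]
      congr 2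
      omega

lemma W_dec (k : ℕ) (hk : 3 ≤ k) (n : ℕ) :
    W k n = blk k n (min n (k - 1)) ++ tailW k n := by
  induction n with
  | zero =>
      have hm : min 0 (k - 1) = 0 := by omega
      rw [hm, blk_zero, W_zero]
      unfold tailW
      rw [if_pos (by omega)]
      rfl
  | succ n ih =>
      rw [W_succ, ih, phi_append, phi_blk k n _ (by omega)]
      rcases lt_trichotomy (n + 1) k with h | h | h
      · -- n + 1 < k : min n (k-1) = n, min (n+1) (k-1) = n+1
        have hmn : min n (k - 1) = n := by omega
        have hmn1 : min (n + 1) (k - 1) = n + 1 := by omega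
        have ht : tailW k n = [n] := by unfold tailW; rw [if_pos (by omega)]
        have ht1 : tailW k (n + 1) = [n + 1] := by unfold tailW; rw [if_pos h]
        have hphi : phi k [n] = [0, n + 1] := by
          have h2 : n % k = n := Nat.mod_eq_of_lt (by omega)
          have h3 : n / k = 0 := Nat.div_eq_of_lt (by omega)
          simp [phi, phiLetter, h2, h3]
          omega
        rw [hmn, hmn1, ht, ht1, hphi, blk_succ]
        have : W k (n + 1 - 1 - n) = [0] := by
          have : n + 1 - 1 - n = 0 := by omega
          rw [this, W_zero]
        rw [this]
        simp
      · -- n + 1 = k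
        have hmn : min n (k - 1) = min (n + 1) (k - 1) := by omega
        have ht : tailW k n = [n] := by unfold tailW; rw [if_pos (by omega)]
        have ht1 : tailW k (n + 1) = shift k (W k 0) := by
          unfold tailW; rw [if_neg (by omega), show n + 1 - k = 0 from by omega]
        have hphi : phi k [n] = [n + 1] := by
          have h2 : n % k = n := Nat.mod_eq_of_lt (by omega)
          have h2' : n = k - 1 := by omega
          simp [phi, phiLetter, h2, h2']
        rw [hmn, ht, ht1, hphi]
        have h4 : shift k (W k 0) = [k] := by simp [shift, W_zero]
        rw [h4, show n + 1 = k from h]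
      · -- n + 1 > k, i.e. n ≥ k
        have hmn : min n (k - 1) = min (n + 1) (k - 1) := by omega
        have ht : tailW k n = shift k (W k (n - k)) := by
          unfold tailW; rw [if_neg (by omega)]
        have ht1 : tailW k (n + 1) = shift k (W k (n + 1 - k)) := by
          unfold tailW; rw [if_neg (by omega)]
        rw [hmn, ht, ht1, phi_shift k (by omega), ← W_succ,
          show n - k + 1 = n + 1 - k from by omega]


/-- Count of occurrences of the two-letter factor `a b`. -/
def occ2 (a b : ℕ) : List ℕ → ℕ
  | x :: y :: t => (if x = a ∧ y = b then 1 else 0) + occ2 a b (y :: t)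
  | _ => 0

lemma occ_cons (B : List ℕ) (x : ℕ) (w : List ℕ) :
    occ B (x :: w) = (if B <+: x :: w then 1 else 0) + occ B w := by
  unfold occ
  have h1 : (x :: w).length + 1 = (w.length + 1) + 1 := by simp
  rw [h1, List.range_succ_eq_map]
  rw [List.filter_cons]
  have h2 : ∀ i : ℕ, (x :: w).drop (i + 1) = w.drop i := fun i => rfl
  have h3 : ((List.range (w.length + 1)).map Nat.succ).filter
      (fun i => decide (B <+: (x :: w).drop i))
      = ((List.range (w.length + 1)).filter
        (fun i => decide (B <+: w.drop i))).map Nat.succ := by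
    rw [List.filter_map]
    congr 1
  rw [h3]
  simp only [List.length_append, List.length_map, List.drop_zero]
  split <;> rename_i hd <;> simp at hd <;> simp [hd, Nat.add_comm]

lemma occ_nil (B : List ℕ) (hB : B ≠ []) : occ B [] = 0 := by
  unfold occ
  rw [List.length_nil]
  have : ¬ (B <+: ([] : List ℕ)) := by
    intro h
    exact hB (List.prefix_nil.mp h)
  simp [List.range_succ, this]

lemma occ_eq_occ2 (a b : ℕ) (w : List ℕ) : occ [a, b] w = occ2 a b w := by
  induction w with
  | nil => rw [occ_nil _ (by simp)]; rfl
  | cons x t ih =>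
      rw [occ_cons, ih]
      cases t with
      | nil =>
          have : ¬ ([a, b] <+: [x]) := by
            intro h
            have := h.length_le
            simp at this
          rw [if_neg this]
          rfl
      | cons y s =>
          have hiff : ([a, b] <+: x :: y :: s) ↔ (x = a ∧ y = b) := by
            constructor
            · intro h
              rw [List.cons_prefix_cons] at h
              obtain ⟨h1, h2⟩ := h
              rw [List.cons_prefix_cons] at h2
              exact ⟨h1.symm, h2.1.symm⟩
            · rintro ⟨rfl, rfl⟩
              exact ⟨s, rfl⟩
          show _ = occ2 a b (x :: y :: s)
          rw [occ2]
          congr 1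
          simp only [hiff]

lemma occ2_append (a b : ℕ) (u v : List ℕ) :
    occ2 a b (u ++ v) = occ2 a b u + occ2 a b v +
      (if u.getLast? = some a ∧ v.head? = some b then 1 else 0) := by
  induction u with
  | nil => simp [occ2]
  | cons x u' ih =>
      cases u' with
      | nil =>
          cases v with
          | nil => simp [occ2]
          | cons y t =>
              show occ2 a b (x :: y :: t) = occ2 a b [x] + occ2 a b (y :: t) + _
              rw [occ2]
              have : occ2 a b [x] = 0 := rfl
              rw [this]
              simp only [List.getLast?_singleton, List.head?_cons, Option.some.injEq]
              ring
      | cons z u'' =>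
          show occ2 a b (x :: z :: (u'' ++ v)) = occ2 a b (x :: z :: u'') + _ + _
          rw [occ2, occ2]
          have hl : (x :: z :: u'').getLast? = (z :: u'').getLast? := by
            simp [List.getLast?_cons_cons]
          rw [hl]
          have := ih
          show (if x = a ∧ z = b then 1 else 0) + occ2 a b ((z :: u'') ++ v) = _
          rw [this]
          ring

lemma occ2_shift (a k : ℕ) (hk : 1 ≤ k) (w : List ℕ) : occ2 a 0 (shift k w) = 0 := by
  induction w with
  | nil => rfl
  | cons x t ih =>
      cases t with
      | nil => rfl
      | cons y s =>
          show occ2 a 0 ((x + k) :: (y + k) :: shift k s) = 0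
          rw [occ2]
          have h1 : ¬ (x + k = a ∧ y + k = 0) := by omega
          rw [if_neg h1]
          simpa [shift] using ih


/-- `cnt k a n = |W_n|_{a0}`. -/
def cnt (k a n : ℕ) : ℕ := occ2 a 0 (W k n)

lemma blk_getLast? (k n M : ℕ) (hM : 1 ≤ M) (hk : 2 ≤ k) :
    (blk k n M).getLast? = some (n - M) := by
  obtain ⟨M', rfl⟩ : ∃ M', M = M' + 1 := ⟨M - 1, by omega⟩
  rw [blk_succ, List.getLast?_append, W_getLast?]
  simp
  omega

lemma occ2_blk (k a n M : ℕ) (hk : 3 ≤ k) (hMn : M ≤ n) :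
    occ2 a 0 (blk k n M) = (∑ j ∈ Finset.range M, cnt k a (n - 1 - j)) +
      (∑ j ∈ Finset.Ico 1 M, if n - j = a then 1 else 0) := by
  induction M with
  | zero => simp [blk_zero, occ2]
  | succ M ih =>
      rw [blk_succ, occ2_append, ih (by omega), Finset.sum_range_succ]
      have hhead : (W k (n - 1 - M)).head? = some 0 := W_head? k _ (by omega)
      rw [hhead]
      rcases Nat.eq_zero_or_pos M with hM0 | hM0
      · subst hM0
        simp [blk_zero, cnt]
      · rw [blk_getLast? k n M hM0 (by omega)]
        have hsum : (∑ j ∈ Finset.Ico 1 (M + 1), if n - j = a then 1 else 0)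
            = (∑ j ∈ Finset.Ico 1 M, if n - j = a then 1 else 0) +
              (if n - M = a then 1 else 0) := by
          rw [Finset.sum_Ico_succ_top (by omega)]
        rw [hsum]
        have hcond : ((some (n - M) = some a ∧ (some 0 : Option ℕ) = some 0)) ↔ (n - M = a) := by
          simp
        rw [if_congr hcond rfl rfl]
        show _ + cnt k a (n - 1 - M) + _ = _
        ring


lemma tailW_head? (k n : ℕ) (hk : 3 ≤ k) :
    (tailW k n).head? = some (if n < k then n else k) := by
  unfold tailW
  split
  · simp
  · obtain ⟨t, ht⟩ := W_cons k (by omega) (n - k)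
    rw [ht]
    simp [shift]

lemma occ2_tailW (k a n : ℕ) (hk : 3 ≤ k) : occ2 a 0 (tailW k n) = 0 := by
  unfold tailW
  split
  · rfl
  · exact occ2_shift a k (by omega) _

/-- The fundamental recurrence for `cnt`. -/
lemma cnt_rec (k a n : ℕ) (hk : 3 ≤ k) (ha : 1 ≤ a) :
    cnt k a n = (∑ j ∈ Finset.range (min n (k - 1)), cnt k a (n - 1 - j)) +
      (if a + 1 ≤ n ∧ n ≤ a + k - 2 then 1 else 0) := by
  have hM : min n (k - 1) ≤ n := min_le_left _ _
  unfold cnt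
  rw [W_dec k hk n, occ2_append, occ2_blk k a n _ hk hM, occ2_tailW k a n hk]
  have hbd : ¬ ((blk k n (min n (k - 1))).getLast? = some a ∧ (tailW k n).head? = some 0) := by
    rintro ⟨h1, h2⟩
    rcases Nat.eq_zero_or_pos n with rfl | hn
    · rw [show min 0 (k - 1) = 0 from by omega, blk_zero] at h1
      simp at h1
    · rw [tailW_head? k n hk] at h2
      simp at h2
      split at h2 <;> omega
  rw [if_neg hbd, add_zero, add_zero]
  congr 1
  -- the boundary sum equals the indicator
  have key : ∀ j ∈ Finset.Ico 1 (min n (k - 1)), (if n - j = a then 1 else 0) =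
      (if j = n - a then 1 else 0) := by
    intro j hj
    rw [Finset.mem_Ico] at hj
    have : (n - j = a) ↔ (j = n - a) := by omega
    rw [if_congr this rfl rfl]
  rw [Finset.sum_congr rfl key, Finset.sum_ite_eq' (Finset.Ico 1 (min n (k - 1))) (n - a)
    (fun _ => 1)]
  have : (n - a) ∈ Finset.Ico 1 (min n (k - 1)) ↔ (a + 1 ≤ n ∧ n ≤ a + k - 2) := by
    rw [Finset.mem_Ico]
    omega
  rw [if_congr this rfl rfl]


open PowerSeries

/-- The "Fibonacci denominator" `1 - y - ⋯ - y^{k-1}`. -/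
noncomputable def S (k : ℕ) : PowerSeries ℚ :=
  1 - ∑ j ∈ Finset.Icc 1 (k - 1), (PowerSeries.X : PowerSeries ℚ) ^ j

lemma constantCoeff_S (k : ℕ) : constantCoeff (S k) = 1 := by
  unfold S
  rw [map_sub, map_one, map_sum]
  have : ∀ j ∈ Finset.Icc 1 (k - 1),
      constantCoeff ((PowerSeries.X : PowerSeries ℚ) ^ j) = 0 := by
    intro j hj
    rw [Finset.mem_Icc] at hj
    rw [map_pow, constantCoeff_X, zero_pow (by omega)]
  rw [Finset.sum_eq_zero this, sub_zero]

lemma S_ne_zero (k : ℕ) : S k ≠ 0 := by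
  intro h
  have := constantCoeff_S k
  rw [h, map_zero] at this
  norm_num at this

lemma S_mul_H (k : ℕ) : S k * Hgf (k - 1) = 1 := by
  have : Hgf (k - 1) = (S k)⁻¹ := rfl
  rw [this]
  exact PowerSeries.mul_inv_cancel _ (by rw [constantCoeff_S]; norm_num)

lemma S_mul_G (k : ℕ) (hk : 3 ≤ k) :
    S k * Ggf (k - 1) = ∑ j ∈ Finset.Icc 1 (k - 2), (PowerSeries.X : PowerSeries ℚ) ^ j := by
  unfold Ggf
  rw [mul_sub, mul_one, mul_comm (S k) _, mul_assoc, mul_comm (Hgf (k-1)) (S k), S_mul_H,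
    mul_one]
  unfold S
  have h1 : k - 1 = (k - 2) + 1 := by omega
  rw [h1, Finset.sum_Icc_succ_top (by omega)]
  ring

lemma coeff_C (k a n : ℕ) : (PowerSeries.coeff n) (_root_.C k [a, 0]) = (cnt k a n : ℚ) := by
  unfold _root_.C cnt
  rw [PowerSeries.coeff_mk, occ_eq_occ2]

lemma S_mul_C (k a : ℕ) (hk : 3 ≤ k) (ha : 1 ≤ a) :
    S k * _root_.C k [a, 0] = PowerSeries.X ^ a *
      ∑ j ∈ Finset.Icc 1 (k - 2), (PowerSeries.X : PowerSeries ℚ) ^ j := by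
  ext n
  -- LHS coefficient
  unfold S
  rw [sub_mul, one_mul, map_sub, Finset.sum_mul, map_sum, coeff_C]
  have hL : ∀ j ∈ Finset.Icc 1 (k - 1),
      (PowerSeries.coeff n) ((PowerSeries.X : PowerSeries ℚ) ^ j * _root_.C k [a, 0]) =
      (if j ≤ n then (cnt k a (n - j) : ℚ) else 0) := by
    intro j _
    rw [PowerSeries.coeff_X_pow_mul', coeff_C]
  rw [Finset.sum_congr rfl hL]
  -- RHS coefficient
  rw [PowerSeries.coeff_X_pow_mul', map_sum]
  have hR : ∀ j ∈ Finset.Icc 1 (k - 2),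
      (PowerSeries.coeff (n - a)) ((PowerSeries.X : PowerSeries ℚ) ^ j) =
      (if n - a = j then (1 : ℚ) else 0) := fun j _ => PowerSeries.coeff_X_pow _ _
  rw [Finset.sum_congr rfl hR, Finset.sum_ite_eq (Finset.Icc 1 (k - 2)) (n - a) (fun _ => (1:ℚ))]
  -- now a pure arithmetic identity about cnt
  have hsum : (∑ j ∈ Finset.Icc 1 (k - 1), if j ≤ n then cnt k a (n - j) else 0)
      = ∑ j ∈ Finset.range (min n (k - 1)), cnt k a (n - 1 - j) := by
    rw [← Finset.sum_filter]
    have hf : (Finset.Icc 1 (k - 1)).filter (fun j => j ≤ n)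
        = Finset.Icc 1 (min n (k - 1)) := by
      ext j
      simp only [Finset.mem_filter, Finset.mem_Icc]
      omega
    rw [hf, ← Finset.Ico_add_one_right_eq_Icc, Finset.sum_Ico_eq_sum_range]
    refine Finset.sum_congr (by congr 1) (fun j _ => by congr 1; omega)
  have hrecN : cnt k a n = (∑ j ∈ Finset.Icc 1 (k - 1), if j ≤ n then cnt k a (n - j) else 0)
      + (if a + 1 ≤ n ∧ n ≤ a + k - 2 then 1 else 0) := by
    rw [hsum]
    exact cnt_rec k a n hk ha
  have hrecQ : (cnt k a n : ℚ) =
      (∑ j ∈ Finset.Icc 1 (k - 1), if j ≤ n then (cnt k a (n - j) : ℚ) else 0)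
      + (if a + 1 ≤ n ∧ n ≤ a + k - 2 then (1 : ℚ) else 0) := by
    exact_mod_cast congrArg (fun m : ℕ => (m : ℚ)) hrecN
  have hind : (if a ≤ n then (if n - a ∈ Finset.Icc 1 (k - 2) then (1:ℚ) else 0) else 0)
      = (if a + 1 ≤ n ∧ n ≤ a + k - 2 then (1 : ℚ) else 0) := by
    simp only [Finset.mem_Icc]
    split_ifs <;> first | rfl | (exfalso; omega)
  rw [hind, hrecQ]
  ring

end Stmt15

theorem stmt15 (k a : ℕ) (hk : 3 ≤ k) (ha : 1 ≤ a) :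
    C k [a, 0] = PowerSeries.X ^ a * Ggf (k - 1) := by
  apply mul_left_cancel₀ (Stmt15.S_ne_zero k)
  rw [Stmt15.S_mul_C k a hk ha]
  rw [show Stmt15.S k * (PowerSeries.X ^ a * Ggf (k - 1))
      = PowerSeries.X ^ a * (Stmt15.S k * Ggf (k - 1)) from by ring,
    Stmt15.S_mul_G k hk]
end
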